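/- arXiv:1410.1701 — 6 statements merged into one kernel-verified Lean document; each statement's English description precedes it below -/
import Mathlib

section
/- Let K be a compact symmetric subset of ℝ^d with convex hull K̂. Then for all n ≥ d, the n-fold Minkowski sum K̂^n equals the Minkowski sum K^{n-d} + K̂^d. -/
/-!
By Carathéodory, a point of `K̂` is a convex combination of at most `d + 1` points of `K`, so
one of its weights is at least `1 / (d + 1)`. Peeling that point off gives
`(d + 1) • K̂ ⊆ K + d • K̂`, i.e. `K̂ + K̂^d = K + K̂^d`, because the Minkowski powers of a
convex set are its dilates. Applying this absorption once for each of the `n - d` extra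
summands of `K̂^n` replaces them by copies of `K`.
-/

open Pointwise

/-- `minkowskiPow A n` is the `n`-fold Minkowski sum `A + A + ⋯ + A` (with `A^0 = {0}`). -/
def minkowskiPow {α : Type*} [AddMonoid α] (A : Set α) : ℕ → Set α
  | 0 => {0}
  | n + 1 => A + minkowskiPow A n

open Module

section AddCommMonoid

variable {α : Type*} [AddCommMonoid α]

theorem minkowskiPow_add (A : Set α) (m n : ℕ) :
    minkowskiPow A (m + n) = minkowskiPow A m + minkowskiPow A n := by
  induction m with
  | zero => rw [Nat.zero_add, minkowskiPow, Set.singleton_zero, zero_add]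
  | succ m ih => rw [Nat.succ_add, minkowskiPow, minkowskiPow, ih, add_assoc]

theorem minkowskiPow_add_eq_of_add_eq {A A' B : Set α} (h : A + B = A' + B) (m : ℕ) :
    minkowskiPow A m + B = minkowskiPow A' m + B := by
  induction m with
  | zero => rfl
  | succ m ih =>
    simp only [minkowskiPow]
    rw [add_assoc, ih, add_left_comm, h, add_left_comm, add_assoc]

end AddCommMonoid

section ConvexHull

variable {𝕜 E ι : Type*} [Field 𝕜] [LinearOrder 𝕜] [IsStrictOrderedRing 𝕜]
  [AddCommGroup E] [Module 𝕜 E]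

theorem minkowskiPow_eq_smul_of_convex {C : Set E} (hC : Convex 𝕜 C) (hne : C.Nonempty) :
    ∀ n : ℕ, minkowskiPow C n = (n : 𝕜) • C
  | 0 => by rw [minkowskiPow, Nat.cast_zero, Set.zero_smul_set hne, Set.singleton_zero]
  | n + 1 => by
    rw [minkowskiPow, minkowskiPow_eq_smul_of_convex hC hne n, Nat.cast_succ,
      hC.add_smul (Nat.cast_nonneg n) zero_le_one, one_smul, add_comm]

theorem Finset.sum_smul_mem_smul_convexHull {t : Finset ι} {c : ι → 𝕜} {z : ι → E} {s : Set E}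
    (hc : ∀ i ∈ t, 0 ≤ c i) (hz : ∀ i ∈ t, z i ∈ s) (hs : s.Nonempty) :
    ∑ i ∈ t, c i • z i ∈ (∑ i ∈ t, c i) • convexHull 𝕜 s := by
  rcases (Finset.sum_nonneg hc).eq_or_lt with hsum | hsum
  · have hzero : ∀ i ∈ t, c i = 0 := (Finset.sum_eq_zero_iff_of_nonneg hc).mp hsum.symm
    have hsum_smul : ∑ i ∈ t, c i • z i = 0 :=
      Finset.sum_eq_zero fun i hi => by rw [hzero i hi, zero_smul]
    rw [hsum_smul, ← hsum, Set.zero_smul_set (hs.mono (subset_convexHull 𝕜 s))]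
    exact Set.zero_mem_zero
  · rw [← smul_inv_smul₀ hsum.ne' (∑ i ∈ t, c i • z i)]
    exact Set.smul_mem_smul_set (t.centerMass_mem_convexHull hc hsum hz)

variable [FiniteDimensional 𝕜 E]

theorem succ_smul_convexHull_subset (K : Set E) :
    ((finrank 𝕜 E : 𝕜) + 1) • convexHull 𝕜 K ⊆ K + (finrank 𝕜 E : 𝕜) • convexHull 𝕜 K := by
  classical
  set d := finrank 𝕜 E
  rintro _ ⟨y, hy, rfl⟩
  obtain ⟨ι, _, z, w, hzK, hind, hw, hw1, rfl⟩ := eq_pos_convex_span_of_mem_convexHull hy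
  have hcard : (Fintype.card ι : 𝕜) ≤ d + 1 := by
    have := hind.card_le_finrank_succ.trans (Nat.succ_le_succ (Submodule.finrank_le _))
    exact_mod_cast this
  obtain ⟨j, -, hj⟩ : ∃ j ∈ Finset.univ, (1 : 𝕜) ≤ (d + 1) * w j := by
    refine Finset.exists_le_of_sum_le
      (Finset.nonempty_of_sum_ne_zero (hw1.symm ▸ one_ne_zero)) ?_
    rw [Finset.sum_const, ← Finset.mul_sum, hw1, nsmul_eq_mul, mul_one, mul_one]
    exact hcard
  set c : ι → 𝕜 := fun i => (d + 1) * w i - if i = j then 1 else 0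
  have hc : ∀ i ∈ Finset.univ, 0 ≤ c i := by
    intro i _
    by_cases hij : i = j
    · simpa [c, hij] using hj
    · simpa [c, hij] using mul_nonneg (by positivity) (hw i).le
  have hc_sum : ∑ i, c i = d := by
    simp [c, Finset.sum_sub_distrib, ← Finset.mul_sum, hw1]
  have hdecomp : ((d : 𝕜) + 1) • ∑ i, w i • z i = z j + ∑ i, c i • z i := by
    simp [c, sub_smul, Finset.sum_sub_distrib, Finset.smul_sum, mul_smul, ite_smul]
  change ((d : 𝕜) + 1) • ∑ i, w i • z i ∈ _
  rw [hdecomp, ← hc_sum]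
  exact Set.add_mem_add (hzK ⟨j, rfl⟩)
    (Finset.sum_smul_mem_smul_convexHull hc (fun i _ => hzK ⟨i, rfl⟩) ⟨z j, hzK ⟨j, rfl⟩⟩)

theorem convexHull_add_minkowskiPow_finrank (K : Set E) :
    convexHull 𝕜 K + minkowskiPow (convexHull 𝕜 K) (finrank 𝕜 E)
      = K + minkowskiPow (convexHull 𝕜 K) (finrank 𝕜 E) := by
  rcases K.eq_empty_or_nonempty with rfl | hne
  · simp
  have hC := convex_convexHull 𝕜 K
  refine (Set.add_subset_add_right (subset_convexHull 𝕜 K)).antisymm' ?_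
  have hsucc : convexHull 𝕜 K + (finrank 𝕜 E : 𝕜) • convexHull 𝕜 K
      = ((finrank 𝕜 E : 𝕜) + 1) • convexHull 𝕜 K := by
    rw [hC.add_smul (Nat.cast_nonneg _) zero_le_one, one_smul, add_comm]
  rw [minkowskiPow_eq_smul_of_convex hC (hne.mono (subset_convexHull 𝕜 K)), hsucc]
  exact succ_smul_convexHull_subset K

end ConvexHull

theorem stmt0_general (d : ℕ) (K : Set (EuclideanSpace ℝ (Fin d)))
    (n : ℕ) (hn : d ≤ n) :
    minkowskiPow (convexHull ℝ K) n =
      minkowskiPow K (n - d) + minkowskiPow (convexHull ℝ K) d := by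
  obtain ⟨m, rfl⟩ := Nat.exists_eq_add_of_le' hn
  rw [Nat.add_sub_cancel, minkowskiPow_add]
  have h := convexHull_add_minkowskiPow_finrank (𝕜 := ℝ) K
  rw [finrank_euclideanSpace_fin] at h
  exact minkowskiPow_add_eq_of_add_eq h m

/-- Let `K` be a compact symmetric subset of `ℝ^d` with convex hull `K̂`. Then for all
`n ≥ d`, the `n`-fold Minkowski sum `K̂^n` equals the Minkowski sum `K^{n-d} + K̂^d`. -/
theorem stmt0 (d : ℕ) (K : Set (EuclideanSpace ℝ (Fin d)))
    (hK : IsCompact K) (hsym : K = -K) (n : ℕ) (hn : d ≤ n) :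
    minkowskiPow (convexHull ℝ K) n =
      minkowskiPow K (n - d) + minkowskiPow (convexHull ℝ K) d :=
  stmt0_general d K n hn
end

section
/- Let K be a compact symmetric subset of ℝ^d with convex hull K̂. Then the Hausdorff distance between the n-fold Minkowski sum K^n and K̂^n is at most d times the Hausdorff distance between K and K̂, for all n ≥ d. -/
/-!
By Carathéodory, a point of `n • conv K` is `n • ∑ wᵢ zᵢ` with `zᵢ ∈ K` affinely independent, so
there are at most `d + 1` of them. Splitting each `n wᵢ` into its integer part and a fractional
part `θᵢ ∈ [0, 1)` writes the point as an element of `m • K` plus an element of `s • conv K`,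
where `s = ∑ θᵢ < d + 1` is an integer (Shapley–Folkman–Starr). Only the `s ≤ d` convex summands
have to be moved into `K`, each by at most `d_H(K, conv K)`.
-/

open Pointwise

open Metric Set

theorem minkowskiPow_eq_nsmul {α : Type*} [AddMonoid α] (A : Set α) :
    ∀ n, minkowskiPow A n = n • A
  | 0 => (zero_nsmul A).symm
  | n + 1 => by rw [minkowskiPow, minkowskiPow_eq_nsmul A n, succ_nsmul']

theorem Set.sum_nsmul_mem_nsmul {α ι : Type*} [AddCommMonoid α] {A : Set α} (t : Finset ι)
    (m : ι → ℕ) {z : ι → α} (hz : ∀ i ∈ t, z i ∈ A) :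
    ∑ i ∈ t, m i • z i ∈ (∑ i ∈ t, m i) • A := by
  rw [← Finset.sum_nsmul_assoc]
  exact finsetSum_mem_finsetSum t _ _ fun i hi ↦ nsmul_mem_nsmul (hz i hi)

section ConvexHull

variable {E : Type*} [AddCommGroup E] [Module ℝ E] {C : Set E}

theorem Convex.nsmul_eq_smul (hC : Convex ℝ C) : ∀ {n : ℕ}, n ≠ 0 → n • C = (n : ℝ) • C
  | 1, _ => by simp
  | n + 2, _ => by
    have hcast : ((n + 2 : ℕ) : ℝ) = 1 + (n + 1 : ℕ) := by push_cast; ring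
    rw [succ_nsmul', hC.nsmul_eq_smul n.succ_ne_zero, hcast,
      hC.add_smul zero_le_one (by positivity), one_smul]

theorem Convex.sum_smul_mem_nsmul {ι : Type*} (hC : Convex ℝ C) {t : Finset ι} {θ : ι → ℝ}
    {z : ι → E} {s : ℕ} (hθ : ∀ i ∈ t, 0 ≤ θ i) (hsum : ∑ i ∈ t, θ i = s)
    (hz : ∀ i ∈ t, z i ∈ C) : ∑ i ∈ t, θ i • z i ∈ s • C := by
  rcases eq_or_ne s 0 with rfl | hs
  · have hθ0 : ∀ i ∈ t, θ i = 0 := by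
      rwa [Nat.cast_zero, Finset.sum_eq_zero_iff_of_nonneg hθ] at hsum
    rw [Finset.sum_eq_zero fun i hi ↦ by rw [hθ0 i hi, zero_smul], zero_nsmul]
    exact zero_mem_zero
  · have hs' : (s : ℝ) ≠ 0 := Nat.cast_ne_zero.mpr hs
    rw [hC.nsmul_eq_smul hs]
    refine ⟨t.centerMass θ z, hC.centerMass_mem hθ (hsum ▸ by positivity) hz, ?_⟩
    simp only [Finset.centerMass, hsum, smul_inv_smul₀ hs']

theorem exists_sum_smul_mem_nsmul_add_nsmul_convexHull {ι : Type*} [Fintype ι] [Nonempty ι]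
    {K : Set E} {μ : ι → ℝ} {z : ι → E} {n : ℕ} (hμ : ∀ i, 0 ≤ μ i) (hsum : ∑ i, μ i = n)
    (hz : ∀ i, z i ∈ K) :
    ∃ m s : ℕ, m + s = n ∧ s < Fintype.card ι ∧ ∑ i, μ i • z i ∈ m • K + s • convexHull ℝ K := by
  set m : ι → ℕ := fun i ↦ ⌊μ i⌋₊
  set θ : ι → ℝ := fun i ↦ μ i - m i
  have hθ0 : ∀ i, 0 ≤ θ i := fun i ↦ sub_nonneg.mpr (Nat.floor_le (hμ i))
  have hθ1 : ∀ i, θ i < 1 := fun i ↦ sub_lt_iff_lt_add'.mpr (Nat.lt_floor_add_one (μ i))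
  have hθsum : ∑ i, θ i = n - ((∑ i, m i : ℕ) : ℝ) := by
    simp only [θ, Finset.sum_sub_distrib, hsum, Nat.cast_sum]
  have hMn : ∑ i, m i ≤ n := by
    have := Finset.sum_nonneg fun i (_ : i ∈ Finset.univ) ↦ hθ0 i
    rw [hθsum, sub_nonneg] at this
    exact_mod_cast this
  have hs : ((n - ∑ i, m i : ℕ) : ℝ) = ∑ i, θ i := by rw [Nat.cast_sub hMn, hθsum]
  refine ⟨∑ i, m i, n - ∑ i, m i, Nat.add_sub_cancel' hMn, ?_, ?_⟩
  · have : ∑ i, θ i < Fintype.card ι := by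
      simpa using Finset.sum_lt_sum_of_nonempty Finset.univ_nonempty fun i _ ↦ hθ1 i
    exact_mod_cast hs ▸ this
  · have hsplit : ∑ i, μ i • z i = ∑ i, m i • z i + ∑ i, θ i • z i := by
      rw [← Finset.sum_add_distrib]
      refine Finset.sum_congr rfl fun i _ ↦ ?_
      rw [← Nat.cast_smul_eq_nsmul ℝ, ← add_smul, add_sub_cancel]
    rw [hsplit]
    exact add_mem_add (Set.sum_nsmul_mem_nsmul _ m fun i _ ↦ hz i) <|
      (convex_convexHull ℝ K).sum_smul_mem_nsmul (fun i _ ↦ hθ0 i) hs.symm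
        fun i _ ↦ subset_convexHull ℝ K (hz i)

theorem exists_mem_nsmul_add_nsmul_convexHull_of_mem_nsmul [FiniteDimensional ℝ E] {K : Set E}
    {n : ℕ} {x : E} (hx : x ∈ n • convexHull ℝ K) :
    ∃ m s : ℕ, m + s = n ∧ s ≤ Module.finrank ℝ E ∧ x ∈ m • K + s • convexHull ℝ K := by
  rcases eq_or_ne n 0 with rfl | hn
  · exact ⟨0, 0, rfl, Nat.zero_le _, by simpa using hx⟩
  rw [(convex_convexHull ℝ K).nsmul_eq_smul hn] at hx
  obtain ⟨y, hy, rfl⟩ := hx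
  obtain ⟨ι, _, z, w, hzK, hz, hw0, hw1, rfl⟩ := eq_pos_convex_span_of_mem_convexHull hy
  have : Nonempty ι := by
    by_contra h
    simp [not_nonempty_iff.mp h] at hw1
  obtain ⟨m, s, hms, hs, hmem⟩ := exists_sum_smul_mem_nsmul_add_nsmul_convexHull
    (μ := fun i ↦ n * w i) (fun i ↦ by have := hw0 i; positivity)
    (by rw [← Finset.mul_sum, hw1, mul_one]) fun i ↦ hzK ⟨i, rfl⟩
  refine ⟨m, s, hms, ?_, ?_⟩
  · have := hz.card_le_finrank_succ.trans (Nat.succ_le_succ (Submodule.finrank_le _))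
    omega
  · simpa only [Finset.smul_sum, smul_smul] using hmem

end ConvexHull

section Seminormed

variable {E : Type*} [SeminormedAddCommGroup E]

theorem forall_mem_nsmul_exists_dist_le {A B : Set E} {r : ℝ}
    (h : ∀ b ∈ B, ∃ a ∈ A, dist b a ≤ r) :
    ∀ (n : ℕ), ∀ x ∈ n • B, ∃ y ∈ n • A, dist x y ≤ n * r
  | 0, x, hx => ⟨x, by simpa using hx, by simp⟩
  | n + 1, _, hx => by
    rw [succ_nsmul'] at hx
    obtain ⟨b, hb, x, hx, rfl⟩ := hx
    obtain ⟨a, ha, hab⟩ := h b hb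
    obtain ⟨y, hy, hxy⟩ := forall_mem_nsmul_exists_dist_le h n x hx
    refine ⟨a + y, succ_nsmul' A n ▸ add_mem_add ha hy, ?_⟩
    calc dist (b + x) (a + y) ≤ dist b a + dist x y := dist_add_add_le _ _ _ _
      _ ≤ r + n * r := add_le_add hab hxy
      _ = (n + 1 : ℕ) * r := by push_cast; ring

end Seminormed

theorem IsCompact.exists_dist_le_hausdorffDist {α : Type*} [PseudoMetricSpace α] {K T : Set α}
    (hK : IsCompact K) (hK₀ : K.Nonempty) (hT : Bornology.IsBounded T) {b : α} (hb : b ∈ T) :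
    ∃ a ∈ K, dist b a ≤ hausdorffDist K T := by
  obtain ⟨a, ha, hdist⟩ := hK.exists_infDist_eq_dist hK₀ b
  exact ⟨a, ha, hausdorffDist_comm (s := T) ▸ hdist ▸ infDist_le_hausdorffDist_of_mem hb
    (hausdorffEDist_ne_top_of_nonempty_of_bounded ⟨b, hb⟩ hK₀ hT hK.isBounded)⟩

theorem stmt1_general (d : ℕ) (K : Set (EuclideanSpace ℝ (Fin d)))
    (hK : IsCompact K) (n : ℕ) :
    Metric.hausdorffDist (minkowskiPow K n) (minkowskiPow (convexHull ℝ K) n) ≤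
      d * Metric.hausdorffDist K (convexHull ℝ K) := by
  rcases K.eq_empty_or_nonempty with rfl | hK₀
  · simp only [convexHull_empty, hausdorffDist_self_zero, mul_zero, le_refl]
  set r := hausdorffDist K (convexHull ℝ K)
  have hr : 0 ≤ r := hausdorffDist_nonneg
  rw [minkowskiPow_eq_nsmul, minkowskiPow_eq_nsmul]
  refine hausdorffDist_le_of_mem_dist (by positivity)
    (fun x hx ↦ ⟨x, nsmul_subset_nsmul_left (subset_convexHull ℝ K) hx, by rw [dist_self]; positivity⟩) ?_
  rintro _ hx
  obtain ⟨m, s, rfl, hs, u, hu, v, hv, rfl⟩ := exists_mem_nsmul_add_nsmul_convexHull_of_mem_nsmul hx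
  have hclose : ∀ b ∈ convexHull ℝ K, ∃ a ∈ K, dist b a ≤ r := fun _ ↦
    hK.exists_dist_le_hausdorffDist hK₀ (isBounded_convexHull.mpr hK.isBounded)
  obtain ⟨w, hw, hvw⟩ := forall_mem_nsmul_exists_dist_le hclose s v hv
  refine ⟨u + w, add_nsmul K m s ▸ add_mem_add hu hw, ?_⟩
  calc dist (u + v) (u + w) = dist v w := dist_add_left u v w
    _ ≤ s * r := hvw
    _ ≤ d * r := by
      gcongr
      simpa [finrank_euclideanSpace_fin] using hs

/-- Let `K` be a compact symmetric subset of `ℝ^d` with convex hull `K̂`. Then the Hausdorff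
distance between the `n`-fold Minkowski sums `K^n` and `K̂^n` is at most `d` times the
Hausdorff distance between `K` and `K̂`, for all `n ≥ d`. -/
theorem stmt1 (d : ℕ) (K : Set (EuclideanSpace ℝ (Fin d)))
    (hK : IsCompact K) (hsym : K = -K) (n : ℕ) (hn : d ≤ n) :
    Metric.hausdorffDist (minkowskiPow K n) (minkowskiPow (convexHull ℝ K) n) ≤
      d * Metric.hausdorffDist K (convexHull ℝ K) :=
  stmt1_general d K hK n
end

section
/- Let δ be a translation-invariant metric on ℤ^d that is bi-Lipschitz equivalent to a norm ‖·‖ on ℝ^d with error bound: there exist C > 0, α > 0 and an increasing unbounded function φ : ℝ_+ → [1,∞) with φ(r)/r → 0, φ doubling (φ(λr) ≤ η(λ)φ(r)), such that (1 − C/φ(‖x−y‖))‖x−y‖ ≤ δ(x,y) ≤ (1 + C/φ(‖x−y‖))‖x−y‖ whenever δ(x,y) ≥ α. Then there exist constants C' > 0 and α_0 > 0 such that for every m ≥ 1 and x, y ∈ ℤ^d with δ(x,y)/m ≥ α_0, there exist points x = x_0, x_1, ..., x_m = y in ℤ^d with (1 − C'/φ(α))·δ(x,y)/m ≤ δ(x_i,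 x_{i+1}) ≤ (1 + C'/φ(α))·δ(x,y)/m for all i, where α = δ(x,y)/m. -/
/-!
Round the points `x + (i/m)(y - x)` of the segment from `x` to `y` down to `ℤ^d`. Consecutive
rounded points differ by `(y - x)/m` up to a vector with coordinates in `(-1, 1)`, so their
distance in the norm `p` is `p(x - y)/m` up to a constant `K`, which is negligible at scale `a = δ(x,y)/m`
because `φ(a) ≤ a`. The comparison hypothesis, applied to `(x, y)` and to each step, turns
`p`-distances into `δ`-distances with relative error `C/φ`, and the doubling property makes `φ`
of every distance in play comparable to `φ(a)`.

Applying the comparison to a step requires `δ ≥ α` on it, which holds because its `p`-length is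
large: if `p(w)` is large but `δ(0, w) < α`, then the first multiple of `w` with `δ ≥ α` would
violate the comparison, and if there is none, translating a far pair by multiples of `w` would.
-/

open Filter

theorem abs_sub_le_mul_iff {t s c : ℝ} :
    |t - s| ≤ c * s ↔ (1 - c) * s ≤ t ∧ t ≤ (1 + c) * s := by
  rw [abs_sub_le_iff]
  constructor <;> rintro ⟨h₁, h₂⟩ <;> constructor <;> linarith

theorem le_two_mul_of_abs_sub_le {s t ε : ℝ} (hs : 0 ≤ s) (hε : ε ≤ 1 / 2)
    (h : |t - s| ≤ ε * s) : s ≤ 2 * t := by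
  nlinarith [(abs_sub_le_iff.1 h).2]

theorem Seminorm.exists_pos_le_mul_norm {ι : Type*} [Fintype ι] (p : Seminorm ℝ (ι → ℝ)) :
    ∃ K > 0, ∀ v, p v ≤ K * ‖v‖ := by
  classical
  set e : ι → ι → ℝ := fun j => Pi.single j 1
  have hsum : 0 ≤ ∑ j, p (e j) := Finset.sum_nonneg fun j _ => apply_nonneg p _
  refine ⟨∑ j, p (e j) + 1, by linarith, fun v => ?_⟩
  calc p v = p (∑ j, v j • e j) := by congr 1; ext i; simp [e, Pi.single_apply]
    _ ≤ ∑ j, p (v j • e j) := Finset.le_sum_of_subadditive p (map_zero p).le (map_add_le_add p) _ _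
    _ = ∑ j, ‖v j‖ * p (e j) := by simp only [map_smul_eq_mul]
    _ ≤ ∑ j, ‖v‖ * p (e j) :=
      Finset.sum_le_sum fun j _ =>
        mul_le_mul_of_nonneg_right (norm_le_pi_norm v j) (apply_nonneg p _)
    _ ≤ (∑ j, p (e j) + 1) * ‖v‖ := by rw [← Finset.mul_sum]; nlinarith [norm_nonneg v]

section Doubling

variable {φ η : ℝ → ℝ}

theorem doubling_const_pos (hφ1 : ∀ r : ℝ, 0 ≤ r → 1 ≤ φ r)
    (hφdbl : ∀ lam > (0 : ℝ), ∀ r > (0 : ℝ), φ (lam * r) ≤ η lam * φ r) {l : ℝ} (hl : 0 < l) :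
    0 < η l := by
  have h := hφdbl l hl 1 one_pos
  rw [mul_one] at h
  nlinarith [hφ1 l hl.le, hφ1 1 zero_le_one]

theorem le_doubling_mul_of_div_le (hφmono : MonotoneOn φ (Set.Ici 0))
    (hφ1 : ∀ r : ℝ, 0 ≤ r → 1 ≤ φ r)
    (hφdbl : ∀ lam > (0 : ℝ), ∀ r > (0 : ℝ), φ (lam * r) ≤ η lam * φ r)
    {l a r : ℝ} (hl : 0 < l) (ha : 0 < a) (hr : a / l ≤ r) : φ a ≤ η l * φ r := by
  have hal : 0 < a / l := div_pos ha hl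
  calc φ a = φ (l * (a / l)) := by rw [mul_div_cancel₀ a hl.ne']
    _ ≤ η l * φ (a / l) := hφdbl l hl _ hal
    _ ≤ η l * φ r := mul_le_mul_of_nonneg_left (hφmono hal.le (hal.le.trans hr) hr)
        (doubling_const_pos hφ1 hφdbl hl).le

theorem eventually_le_self_of_tendsto_div (hφsub : Tendsto (fun r => φ r / r) atTop (nhds 0)) :
    ∀ᶠ r in atTop, φ r ≤ r := by
  filter_upwards [hφsub.eventually_lt_const one_pos, eventually_gt_atTop 0] with r h hr
  exact ((div_lt_one hr).1 h).le

end Doubling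

section Lattice

variable {d : ℕ}

def latticeDist (p : Seminorm ℝ (Fin d → ℝ)) (x y : Fin d → ℤ) : ℝ :=
  p fun i => (x i : ℝ) - y i

section LatticeDist

variable (p : Seminorm ℝ (Fin d → ℝ))

theorem latticeDist_nonneg (x y : Fin d → ℤ) : 0 ≤ latticeDist p x y :=
  apply_nonneg p _

theorem latticeDist_comm (x y : Fin d → ℤ) : latticeDist p x y = latticeDist p y x := by
  rw [latticeDist, latticeDist, ← map_neg_eq_map p]
  congr 1; ext i; simp

theorem latticeDist_triangle (x y z : Fin d → ℤ) :
    latticeDist p x z ≤ latticeDist p x y + latticeDist p y z := by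
  refine le_of_eq_of_le (congrArg p ?_) (map_add_le_add p _ _)
  ext i; simp

theorem latticeDist_add_right (x y z : Fin d → ℤ) :
    latticeDist p (x + z) (y + z) = latticeDist p x y := by
  simp [latticeDist]

theorem latticeDist_zero_nsmul (k : ℕ) (w : Fin d → ℤ) :
    latticeDist p 0 (k • w) = k * latticeDist p 0 w := by
  have h : (fun i => ((0 : Fin d → ℤ) i : ℝ) - ((k • w) i : ℤ)) =
      (k : ℝ) • fun i => ((0 : Fin d → ℤ) i : ℝ) - w i := by
    ext i; simp
  rw [latticeDist, h, map_smul_eq_mul, Real.norm_natCast, latticeDist]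

end LatticeDist

def ComparableWithError (δ : (Fin d → ℤ) → (Fin d → ℤ) → ℝ) (p : Seminorm ℝ (Fin d → ℝ))
    (φ : ℝ → ℝ) (C α : ℝ) : Prop :=
  ∀ x y, α ≤ δ x y →
    |δ x y - latticeDist p x y| ≤ C / φ (latticeDist p x y) * latticeDist p x y

noncomputable def roundedChain (x y : Fin d → ℤ) (m i : ℕ) : Fin d → ℤ :=
  fun j => x j + ⌊(i / m : ℝ) * (y j - x j)⌋

theorem roundedChain_zero (x y : Fin d → ℤ) (m : ℕ) : roundedChain x y m 0 = x := by
  ext j; simp [roundedChain]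

theorem roundedChain_self (x y : Fin d → ℤ) {m : ℕ} (hm : m ≠ 0) : roundedChain x y m m = y := by
  ext j
  have : ((m : ℝ) / m) * ((y j : ℝ) - x j) = ((y j - x j : ℤ) : ℝ) := by
    rw [div_self (Nat.cast_ne_zero.2 hm)]; push_cast; ring
  simp only [roundedChain, this, Int.floor_intCast]
  ring

theorem abs_latticeDist_roundedChain_sub_le {p : Seminorm ℝ (Fin d → ℝ)} {K : ℝ}
    (hK : ∀ v, p v ≤ K * ‖v‖) (hK0 : 0 ≤ K) (x y : Fin d → ℤ) {m : ℕ} (hm : 0 < m) (i : ℕ) :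
    |latticeDist p (roundedChain x y m i) (roundedChain x y m (i + 1)) - latticeDist p x y / m|
      ≤ K := by
  have hm' : (0 : ℝ) < m := Nat.cast_pos.2 hm
  have hscale : latticeDist p x y / m = p ((m : ℝ)⁻¹ • fun j => (x j : ℝ) - y j) := by
    rw [map_smul_eq_mul, norm_inv, Real.norm_natCast, latticeDist, inv_mul_eq_div]
  rw [hscale, latticeDist]
  refine (abs_sub_map_le_sub p _ _).trans <| (hK _).trans <| mul_le_of_le_one_right hK0 ?_
  refine (pi_norm_le_iff_of_nonneg zero_le_one).2 fun j => ?_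
  set A : ℝ := (i / m : ℝ) * (y j - x j)
  set B : ℝ := ((i + 1 : ℕ) / m : ℝ) * (y j - x j)
  have hstep : ((roundedChain x y m i j : ℝ) - roundedChain x y m (i + 1) j)
      - (m : ℝ)⁻¹ * ((x j : ℝ) - y j) = (⌊A⌋ - A) - (⌊B⌋ - B) := by
    simp only [roundedChain, A, B]; push_cast; field_simp; ring
  simp only [Pi.sub_apply, Pi.smul_apply, smul_eq_mul, Real.norm_eq_abs, hstep, abs_le]
  constructor <;> linarith [Int.floor_le A, Int.lt_floor_add_one A, Int.floor_le B,
    Int.lt_floor_add_one B]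

section Comparison

variable {δ : (Fin d → ℤ) → (Fin d → ℤ) → ℝ} {p : Seminorm ℝ (Fin d → ℝ)} {φ : ℝ → ℝ} {C α : ℝ}

theorem ComparableWithError.le_one_add_mul (hcomp : ComparableWithError δ p φ C α)
    (hφ1 : ∀ r : ℝ, 0 ≤ r → 1 ≤ φ r) (hC : 0 ≤ C) {x y : Fin d → ℤ} (hxy : α ≤ δ x y) :
    δ x y ≤ (1 + C) * latticeDist p x y := by
  have hρ := latticeDist_nonneg p x y
  have hCφ : C / φ (latticeDist p x y) ≤ C := div_le_self hC (hφ1 _ hρ)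
  exact (abs_sub_le_mul_iff.1 (hcomp x y hxy)).2.trans (by nlinarith)

theorem ComparableWithError.latticeDist_le_two_mul (hcomp : ComparableWithError δ p φ C α)
    (hφ1 : ∀ r : ℝ, 0 ≤ r → 1 ≤ φ r) {T : ℝ} (hT : ∀ r ≥ T, 2 * C ≤ φ r)
    {x y : Fin d → ℤ} (hxy : α ≤ δ x y) (hTxy : T ≤ latticeDist p x y) :
    latticeDist p x y ≤ 2 * δ x y := by
  have hρ := latticeDist_nonneg p x y
  have hφ : 0 < φ (latticeDist p x y) := by linarith [hφ1 _ hρ]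
  refine le_two_mul_of_abs_sub_le hρ ?_ (hcomp x y hxy)
  rw [div_le_iff₀ hφ]
  linarith [hT _ hTxy]

theorem ComparableWithError.abs_sub_le_of_scale (hcomp : ComparableWithError δ p φ C α)
    (hφmono : MonotoneOn φ (Set.Ici 0)) (hφ1 : ∀ r : ℝ, 0 ≤ r → 1 ≤ φ r) {η : ℝ → ℝ}
    (hφdbl : ∀ lam > (0 : ℝ), ∀ r > (0 : ℝ), φ (lam * r) ≤ η lam * φ r) (hC : 0 ≤ C)
    {a : ℝ} (ha : 0 < a) {x y : Fin d → ℤ} (hxy : α ≤ δ x y)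
    (hscale : a ≤ (2 + C) * latticeDist p x y) :
    |δ x y - latticeDist p x y| ≤ C * η (2 + C) / φ a * latticeDist p x y := by
  have hρ := latticeDist_nonneg p x y
  have hφa : φ a ≤ η (2 + C) * φ (latticeDist p x y) :=
    le_doubling_mul_of_div_le hφmono hφ1 hφdbl (by linarith) ha
      ((div_le_iff₀' (by linarith)).2 hscale)
  refine (hcomp x y hxy).trans (mul_le_mul_of_nonneg_right ?_ hρ)
  rw [div_le_div_iff₀ (by linarith [hφ1 _ hρ]) (by linarith [hφ1 _ ha.le])]
  nlinarith [mul_le_mul_of_nonneg_left hφa hC]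

theorem dist_zero_succ_nsmul_lt {T : ℝ} (hδtri : ∀ x y z, δ x z ≤ δ x y + δ y z)
    (hinv : ∀ x y z, δ (x + z) (y + z) = δ x y)
    (hρδ : ∀ x y, α ≤ δ x y → T ≤ latticeDist p x y → latticeDist p x y ≤ 2 * δ x y)
    {w : Fin d → ℤ} (hw : δ 0 w < α) (hwT : T ≤ latticeDist p 0 w)
    (hw4 : 4 * α ≤ latticeDist p 0 w) (k : ℕ) : δ 0 ((k + 1) • w) < α := by
  induction k with
  | zero => simpa using hw
  | succ k ih =>
    have hstep : δ ((k + 1) • w) ((k + 1 + 1) • w) = δ 0 w := by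
      rw [succ_nsmul' w (k + 1), ← hinv 0 w ((k + 1) • w), zero_add]
    have hlt : δ 0 ((k + 1 + 1) • w) < 2 * α := by
      linarith [hδtri 0 ((k + 1) • w) ((k + 1 + 1) • w)]
    by_contra! hge
    have hρ := latticeDist_zero_nsmul p (k + 1 + 1) w
    have hρ0 := latticeDist_nonneg p 0 w
    push_cast at hρ
    have hρ2 := hρδ _ _ hge (by rw [hρ]; nlinarith)
    nlinarith

theorem exists_le_dist_zero_succ_nsmul {T : ℝ} (hδsymm : ∀ x y, δ x y = δ y x)
    (hδtri : ∀ x y z, δ x z ≤ δ x y + δ y z) (hinv : ∀ x y z, δ (x + z) (y + z) = δ x y)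
    (hρδ : ∀ x y, α ≤ δ x y → T ≤ latticeDist p x y → latticeDist p x y ≤ 2 * δ x y)
    {x₀ y₀ : Fin d → ℤ} (h₀ : 2 * α ≤ δ x₀ y₀) {w : Fin d → ℤ} (hw : 0 < latticeDist p 0 w) :
    ∃ k : ℕ, α ≤ δ 0 ((k + 1) • w) := by
  by_contra! hlt
  obtain ⟨k, hk⟩ :=
    exists_nat_gt ((max T (2 * (δ x₀ y₀ + α)) + latticeDist p x₀ y₀) / latticeDist p 0 w)
  rw [div_lt_iff₀ hw] at hk
  set Y := y₀ + (k + 1) • w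
  have hδY : δ y₀ Y = δ 0 ((k + 1) • w) := by
    rw [← hinv 0 ((k + 1) • w) y₀, zero_add, add_comm]
  have hρY : latticeDist p y₀ Y = k * latticeDist p 0 w + latticeDist p 0 w := by
    have h := latticeDist_add_right p 0 ((k + 1) • w) y₀
    rw [zero_add, add_comm _ y₀, latticeDist_zero_nsmul] at h
    rw [h]; push_cast; ring
  have hlo : α ≤ δ x₀ Y := by linarith [hδtri x₀ Y y₀, hδsymm Y y₀, hlt k]
  have hup : δ x₀ Y ≤ δ x₀ y₀ + α := by linarith [hδtri x₀ y₀ Y, hlt k]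
  have hfar : latticeDist p y₀ Y - latticeDist p x₀ y₀ ≤ latticeDist p x₀ Y := by
    linarith [latticeDist_triangle p y₀ x₀ Y, latticeDist_comm p x₀ y₀]
  have hT := le_max_left T (2 * (δ x₀ y₀ + α))
  have hδT := le_max_right T (2 * (δ x₀ y₀ + α))
  linarith [hρδ x₀ Y hlo (by linarith)]

theorem ComparableWithError.exists_le_dist (hcomp : ComparableWithError δ p φ C α)
    (hφ1 : ∀ r : ℝ, 0 ≤ r → 1 ≤ φ r) (hφunb : Tendsto φ atTop atTop) (hα : 0 < α)
    (hδsymm : ∀ x y, δ x y = δ y x) (hδtri : ∀ x y z, δ x z ≤ δ x y + δ y z)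
    (hinv : ∀ x y z, δ (x + z) (y + z) = δ x y) :
    ∃ β, ∀ x₀ y₀, 2 * α ≤ δ x₀ y₀ → ∀ x y, β ≤ latticeDist p x y → α ≤ δ x y := by
  obtain ⟨T, hT⟩ := eventually_atTop.1 (hφunb.eventually_ge_atTop (2 * C))
  have hρδ := fun x y => hcomp.latticeDist_le_two_mul hφ1 hT (x := x) (y := y)
  refine ⟨max T (4 * α), fun x₀ y₀ h₀ x y hxy => ?_⟩
  have hρ : latticeDist p x y = latticeDist p 0 (y - x) := by
    rw [← latticeDist_add_right p 0 (y - x) x, zero_add, sub_add_cancel]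
  have hδ : δ x y = δ 0 (y - x) := by rw [← hinv 0 (y - x) x, zero_add, sub_add_cancel]
  rw [hρ] at hxy
  rw [hδ]
  by_contra! hlt
  obtain ⟨k, hk⟩ := exists_le_dist_zero_succ_nsmul hδsymm hδtri hinv hρδ h₀
    (lt_of_lt_of_le (by linarith) (le_of_max_le_right hxy))
  exact (dist_zero_succ_nsmul_lt hδtri hinv hρδ hlt (le_of_max_le_left hxy)
    (le_of_max_le_right hxy) k).not_ge hk

theorem abs_dist_roundedChain_sub_le_of_forall_abs_sub_le {β ε κ K a : ℝ}
    (hrel : ∀ x y, α ≤ δ x y → a ≤ 2 * latticeDist p x y →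
      |δ x y - latticeDist p x y| ≤ ε * latticeDist p x y)
    (hβ : ∀ x y, β ≤ latticeDist p x y → α ≤ δ x y) (hβa : 2 * β ≤ a)
    (hK : ∀ v, p v ≤ K * ‖v‖) (hK0 : 0 ≤ K) (hKa : K ≤ κ * a)
    (hε : 0 ≤ ε) (hsmall : 2 * ε + κ ≤ 1 / 2) (ha : 0 < a)
    {m : ℕ} (hm : 0 < m) {x y : Fin d → ℤ} (hxy : δ x y = m * a)
    (hN : |δ x y - latticeDist p x y| ≤ ε * latticeDist p x y) (i : ℕ) :
    |δ (roundedChain x y m i) (roundedChain x y m (i + 1)) - a| ≤ (4 * ε + κ) * a := by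
  set N := latticeDist p x y
  set n := latticeDist p (roundedChain x y m i) (roundedChain x y m (i + 1))
  have hm' : (0 : ℝ) < m := Nat.cast_pos.2 hm
  have hκ : 0 ≤ κ := (mul_nonneg_iff_of_pos_right ha).1 (hK0.trans hKa)
  have hNm : |N / m - a| ≤ 2 * ε * a := by
    have hN2 : N ≤ 2 * δ x y := le_two_mul_of_abs_sub_le (latticeDist_nonneg p x y) (by linarith) hN
    have h : |N - m * a| ≤ m * (2 * ε * a) := by
      rw [abs_sub_comm, ← hxy]
      nlinarith
    rw [show N / m - a = (N - m * a) / m by field_simp, abs_div, abs_of_pos hm', div_le_iff₀ hm']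
    linarith
  have hna : |n - a| ≤ (2 * ε + κ) * a := by
    have hround := abs_latticeDist_roundedChain_sub_le hK hK0 x y hm i
    linarith [abs_sub_le n (N / m) a]
  have hn : a / 2 ≤ n ∧ n ≤ 2 * a := by
    rw [abs_le] at hna
    constructor <;> nlinarith
  have hδn := hrel _ _ (hβ _ _ (by linarith)) (by linarith)
  calc |δ (roundedChain x y m i) (roundedChain x y m (i + 1)) - a|
      ≤ |δ (roundedChain x y m i) (roundedChain x y m (i + 1)) - n| + |n - a| := abs_sub_le _ _ _
    _ ≤ ε * (2 * a) + (2 * ε + κ) * a :=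
      add_le_add (hδn.trans (mul_le_mul_of_nonneg_left hn.2 hε)) hna
    _ = (4 * ε + κ) * a := by ring

theorem ComparableWithError.abs_dist_roundedChain_sub_le {η : ℝ → ℝ} {β K a : ℝ}
    (hcomp : ComparableWithError δ p φ C α) (hφmono : MonotoneOn φ (Set.Ici 0))
    (hφ1 : ∀ r : ℝ, 0 ≤ r → 1 ≤ φ r)
    (hφdbl : ∀ lam > (0 : ℝ), ∀ r > (0 : ℝ), φ (lam * r) ≤ η lam * φ r) (hC : 0 ≤ C)
    (hK : ∀ v, p v ≤ K * ‖v‖) (hK0 : 0 ≤ K) (hβ : ∀ x y, β ≤ latticeDist p x y → α ≤ δ x y)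
    (ha : 0 < a) (hαa : α ≤ a) (hβa : 2 * β ≤ a) (hφa : φ a ≤ a)
    (hφlarge : 4 * C * η (2 + C) + 2 * K ≤ φ a) {m : ℕ} (hm : 0 < m) {x y : Fin d → ℤ}
    (hxy : δ x y = m * a) (i : ℕ) :
    |δ (roundedChain x y m i) (roundedChain x y m (i + 1)) - a|
      ≤ (4 * C * η (2 + C) + K) / φ a * a := by
  set E := η (2 + C)
  have hP : 0 < φ a := by linarith [hφ1 a ha.le]
  have hm' : (1 : ℝ) ≤ m := Nat.one_le_cast.2 hm
  have hαxy : α ≤ δ x y := by nlinarith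
  have hrel : ∀ s t, α ≤ δ s t → a ≤ 2 * latticeDist p s t →
      |δ s t - latticeDist p s t| ≤ C * E / φ a * latticeDist p s t := fun s t hst hρ =>
    hcomp.abs_sub_le_of_scale hφmono hφ1 hφdbl hC ha hst
      (by nlinarith [latticeDist_nonneg p s t])
  have hN := hcomp.abs_sub_le_of_scale hφmono hφ1 hφdbl hC ha hαxy
    (by nlinarith [hcomp.le_one_add_mul hφ1 hC hαxy, latticeDist_nonneg p x y])
  have hE : 0 ≤ E := (doubling_const_pos hφ1 hφdbl (by linarith)).le
  convert abs_dist_roundedChain_sub_le_of_forall_abs_sub_le hrel hβ hβa hK hK0 (κ := K / φ a)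
    ?_ (by positivity) ?_ ha hm hxy hN i using 1
  · field_simp
  · rw [div_mul_eq_mul_div, le_div_iff₀ hP]; nlinarith
  · rw [show 2 * (C * E / φ a) + K / φ a = (2 * C * E + K) / φ a by ring, div_le_iff₀ hP]
    linarith

end Comparison

end Lattice

theorem stmt9_general (d : ℕ)
    (δ : (Fin d → ℤ) → (Fin d → ℤ) → ℝ)
    (hδsymm : ∀ x y, δ x y = δ y x)
    (hδtri : ∀ x y z, δ x z ≤ δ x y + δ y z)
    (hinv : ∀ x y z, δ (x + z) (y + z) = δ x y)
    (nrm : (Fin d → ℝ) → ℝ)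
    (hnrmadd : ∀ v w, nrm (v + w) ≤ nrm v + nrm w)
    (hnrmsmul : ∀ (a : ℝ) (v), nrm (a • v) = |a| * nrm v)
    (C α : ℝ) (hC : 0 < C) (hα : 0 < α)
    (φ : ℝ → ℝ) (hφmono : MonotoneOn φ (Set.Ici 0))
    (hφ1 : ∀ r : ℝ, 0 ≤ r → 1 ≤ φ r)
    (hφunb : Tendsto φ atTop atTop)
    (hφsub : Tendsto (fun r => φ r / r) atTop (nhds 0))
    (η : ℝ → ℝ)
    (hφdbl : ∀ lam > (0 : ℝ), ∀ r > (0 : ℝ), φ (lam * r) ≤ η lam * φ r)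
    (hcomp : ∀ x y : Fin d → ℤ, α ≤ δ x y →
      (1 - C / φ (nrm (fun i => (x i : ℝ) - (y i : ℝ)))) *
          nrm (fun i => (x i : ℝ) - (y i : ℝ)) ≤ δ x y ∧
      δ x y ≤ (1 + C / φ (nrm (fun i => (x i : ℝ) - (y i : ℝ)))) *
          nrm (fun i => (x i : ℝ) - (y i : ℝ))) :
    ∃ C' > (0 : ℝ), ∃ α0 > (0 : ℝ), ∀ m : ℕ, 1 ≤ m → ∀ x y : Fin d → ℤ,
      α0 ≤ δ x y / m →
        ∃ z : ℕ → (Fin d → ℤ), z 0 = x ∧ z m = y ∧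
          ∀ i < m,
            (1 - C' / φ (δ x y / m)) * (δ x y / m) ≤ δ (z i) (z (i + 1)) ∧
            δ (z i) (z (i + 1)) ≤ (1 + C' / φ (δ x y / m)) * (δ x y / m) := by
  let p : Seminorm ℝ (Fin d → ℝ) :=
    Seminorm.of nrm hnrmadd fun a v => by rw [Real.norm_eq_abs]; exact hnrmsmul a v
  have hcomp' : ComparableWithError δ p φ C α := fun x y hxy => abs_sub_le_mul_iff.2 (hcomp x y hxy)
  obtain ⟨K, hK, hpK⟩ := p.exists_pos_le_mul_norm
  obtain ⟨β, hβ⟩ := hcomp'.exists_le_dist hφ1 hφunb hα hδsymm hδtri hinv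
  have hE : 0 < η (2 + C) := doubling_const_pos hφ1 hφdbl (by linarith)
  obtain ⟨A, hA⟩ := eventually_atTop.1 <| (eventually_ge_atTop (2 * α)).and <|
    (eventually_ge_atTop (2 * β)).and <| (eventually_le_self_of_tendsto_div hφsub).and <|
    hφunb.eventually_ge_atTop (4 * C * η (2 + C) + 2 * K)
  refine ⟨4 * C * η (2 + C) + K, by positivity, max A 1, by positivity, fun m hm x y hxy => ?_⟩
  set a := δ x y / m
  obtain ⟨h2α, h2β, hφa, hφlarge⟩ := hA a (le_of_max_le_left hxy)
  have ha : 0 < a := by linarith [le_of_max_le_right hxy]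
  have hm' : (1 : ℝ) ≤ m := Nat.one_le_cast.2 hm
  have hxy' : δ x y = m * a := (mul_div_cancel₀ _ (by positivity)).symm
  refine ⟨roundedChain x y m, roundedChain_zero x y m, roundedChain_self x y (by omega),
    fun i _ => ?_⟩
  rw [← abs_sub_le_mul_iff]
  exact hcomp'.abs_dist_roundedChain_sub_le hφmono hφ1 hφdbl hC.le hpK hK.le
    (hβ x y (by nlinarith)) ha (by linarith) h2β hφa hφlarge hm hxy' i

/-- Let `δ` be a translation-invariant metric on `ℤ^d` comparable to a norm `‖·‖` on `ℝ^d`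
with error bound controlled by an increasing unbounded sublinear doubling function
`φ : ℝ₊ → [1,∞)`: namely `(1 − C/φ(‖x−y‖))‖x−y‖ ≤ δ(x,y) ≤ (1 + C/φ(‖x−y‖))‖x−y‖` whenever
`δ(x,y) ≥ α`. Then there exist `C' > 0` and `α₀ > 0` such that for every `m ≥ 1` and
`x, y ∈ ℤ^d` with `δ(x,y)/m ≥ α₀`, there are points `x = x₀, x₁, …, x_m = y` in `ℤ^d` with
`(1 − C'/φ(α))·δ(x,y)/m ≤ δ(x_i, x_{i+1}) ≤ (1 + C'/φ(α))·δ(x,y)/m` for all `i`, where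
`α = δ(x,y)/m`. -/
theorem stmt9 (d : ℕ)
    (δ : (Fin d → ℤ) → (Fin d → ℤ) → ℝ)
    (hδ0 : ∀ x y, δ x y = 0 ↔ x = y)
    (hδsymm : ∀ x y, δ x y = δ y x)
    (hδtri : ∀ x y z, δ x z ≤ δ x y + δ y z)
    (hinv : ∀ x y z, δ (x + z) (y + z) = δ x y)
    (nrm : (Fin d → ℝ) → ℝ)
    (hnrm0 : ∀ v, nrm v = 0 ↔ v = 0)
    (hnrmadd : ∀ v w, nrm (v + w) ≤ nrm v + nrm w)
    (hnrmsmul : ∀ (a : ℝ) (v), nrm (a • v) = |a| * nrm v)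
    (C α : ℝ) (hC : 0 < C) (hα : 0 < α)
    (φ : ℝ → ℝ) (hφmono : MonotoneOn φ (Set.Ici 0))
    (hφ1 : ∀ r : ℝ, 0 ≤ r → 1 ≤ φ r)
    (hφunb : Tendsto φ atTop atTop)
    (hφsub : Tendsto (fun r => φ r / r) atTop (nhds 0))
    (η : ℝ → ℝ)
    (hηsub : Tendsto (fun lam => η lam / lam) atTop (nhds 0))
    (hφdbl : ∀ lam > (0 : ℝ), ∀ r > (0 : ℝ), φ (lam * r) ≤ η lam * φ r)
    (hcomp : ∀ x y : Fin d → ℤ, α ≤ δ x y →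
      (1 - C / φ (nrm (fun i => (x i : ℝ) - (y i : ℝ)))) *
          nrm (fun i => (x i : ℝ) - (y i : ℝ)) ≤ δ x y ∧
      δ x y ≤ (1 + C / φ (nrm (fun i => (x i : ℝ) - (y i : ℝ)))) *
          nrm (fun i => (x i : ℝ) - (y i : ℝ))) :
    ∃ C' > (0 : ℝ), ∃ α0 > (0 : ℝ), ∀ m : ℕ, 1 ≤ m → ∀ x y : Fin d → ℤ,
      α0 ≤ δ x y / m →
        ∃ z : ℕ → (Fin d → ℤ), z 0 = x ∧ z m = y ∧
          ∀ i < m,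
            (1 - C' / φ (δ x y / m)) * (δ x y / m) ≤ δ (z i) (z (i + 1)) ∧
            δ (z i) (z (i + 1)) ≤ (1 + C' / φ (δ x y / m)) * (δ x y / m) :=
  stmt9_general d δ hδsymm hδtri hinv nrm hnrmadd hnrmsmul C α hC hα φ hφmono hφ1 hφunb hφsub η
    hφdbl hcomp
end

section
/- Let (X, d) be a metric space and N : ℝ_+ → ℝ_+ an increasing unbounded function. Suppose X is SAG*(N): there is α_0 > 0 such that for all x, y with d(x,y) = r ≥ α_0 and all λ ∈ [0,1], there exists z with (λ − 1/N(r))·r ≤ d(x,z) ≤ (λ + 1/N(r))·r and (1 − λ − 1/N(r))·r ≤ d(z,y) ≤ (1 − λ + 1/N(r))·r. Then for all sufficiently large r, the ball B(x, (1 + 1/N(r))·r) is contained in the 6r/N(r)-neighborhood of B(x, r), for every x ∈ X. -/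
open Filter Metric Set

/-
Take `y` with `r < s = d(x, y) ≤ (1 + 1/N(r)) r` and apply SAG* to `x, y` with
`λ = r/s − 1/N(s)`: the point `z` it produces lies in `B(x, r)`, and
`d(z, y) ≤ (s − r) + 2s/N(s) ≤ r/N(r) + 2s/N(r) ≤ 6r/N(r)` because `N` is increasing and
`s ≤ 4r/3` once `N(r) ≥ 3`.
-/

section

variable {X : Type*} [PseudoMetricSpace X]

lemma closedBall_subset_cthickening_closedBall {x : X} {r R t : ℝ}
    (h : ∀ y, r < dist y x → dist y x ≤ R → ∃ z ∈ closedBall x r, dist y z ≤ t) :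
    closedBall x R ⊆ cthickening t (closedBall x r) := by
  intro y hy
  rcases le_or_gt (dist y x) r with hyr | hry
  · exact self_subset_cthickening _ (mem_closedBall.mpr hyr)
  · obtain ⟨z, hz, hyz⟩ := h y hry (mem_closedBall.mp hy)
    exact mem_cthickening_of_dist_le y z _ _ hz hyz

lemma exists_mem_closedBall_dist_le_of_interpolating {x y : X} {r ε : ℝ}
    (hxy : 0 < dist x y) (hε : 0 ≤ ε) (hεr : ε * dist x y ≤ r) (hr : r ≤ dist x y)
    (h : ∀ lam ∈ Icc (0 : ℝ) 1, ∃ z,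
      dist x z ≤ (lam + ε) * dist x y ∧ dist z y ≤ (1 - lam + ε) * dist x y) :
    ∃ z ∈ closedBall x r, dist z y ≤ dist x y - r + 2 * ε * dist x y := by
  set s := dist x y
  have hεle : ε ≤ r / s := (le_div_iff₀ hxy).mpr hεr
  have hrs : r / s ≤ 1 := (div_le_one hxy).mpr hr
  obtain ⟨z, hxz, hzy⟩ := h (r / s - ε) ⟨by linarith, by linarith⟩
  have hlam : (r / s - ε) * s = r - ε * s := by field_simp
  refine ⟨z, mem_closedBall'.mpr ?_, ?_⟩
  · linarith [add_mul (r / s - ε) ε s]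
  · linarith [show (1 - (r / s - ε) + ε) * s = s - (r / s - ε) * s + ε * s by ring]

end

lemma mul_le_of_le_one_add_mul {r s δ ε : ℝ} (hr : 0 < r) (hε : 0 ≤ ε) (hεδ : ε ≤ δ)
    (hδ : δ ≤ 1 / 3) (hs : s ≤ (1 + δ) * r) : ε * s ≤ r := by
  nlinarith [mul_le_mul_of_nonneg_left hs hε, mul_le_mul_of_nonneg_right hεδ hr.le,
    mul_le_mul_of_nonneg_right hδ hr.le]

lemma sub_add_two_mul_le_of_le_one_add_mul {r s δ ε : ℝ} (hr : 0 < r)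
    (hεδ : ε ≤ δ) (hδ : δ ≤ 1 / 3) (hrs : r ≤ s) (hs : s ≤ (1 + δ) * r) :
    s - r + 2 * ε * s ≤ 6 * δ * r := by
  nlinarith [mul_le_mul_of_nonneg_right hεδ (hr.le.trans hrs)]

theorem stmt10_general {X : Type*} [MetricSpace X] (N : ℝ → ℝ)
    (hmono : Monotone N)
    (hunb : Tendsto N atTop atTop)
    (α0 : ℝ) (hα0 : 0 < α0)
    (hsag : ∀ x y : X, α0 ≤ dist x y → ∀ lam ∈ Set.Icc (0 : ℝ) 1,
      ∃ z : X,
        (lam - 1 / N (dist x y)) * dist x y ≤ dist x z ∧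
        dist x z ≤ (lam + 1 / N (dist x y)) * dist x y ∧
        (1 - lam - 1 / N (dist x y)) * dist x y ≤ dist z y ∧
        dist z y ≤ (1 - lam + 1 / N (dist x y)) * dist x y) :
    ∃ r0 : ℝ, ∀ r : ℝ, r0 ≤ r → ∀ x : X,
      Metric.closedBall x ((1 + 1 / N r) * r) ⊆
        Metric.cthickening (6 * r / N r) (Metric.closedBall x r) := by
  obtain ⟨M, hM⟩ := eventually_atTop.mp (hunb.eventually_ge_atTop 3)
  refine ⟨max M α0, fun r hr x => ?_⟩
  have hr0 : 0 < r := hα0.trans_le (le_of_max_le_right hr)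
  have hNr : 3 ≤ N r := hM r (le_of_max_le_left hr)
  rw [show 6 * r / N r = 6 * (1 / N r) * r by ring]
  refine closedBall_subset_cthickening_closedBall fun y hry hyR => ?_
  rw [dist_comm] at hry hyR
  have hNs : N r ≤ N (dist x y) := hmono hry.le
  have hδ : 1 / N r ≤ 1 / 3 := one_div_le_one_div_of_le (by norm_num) hNr
  have hεδ : 1 / N (dist x y) ≤ 1 / N r := one_div_le_one_div_of_le (by linarith) hNs
  have hε : 0 ≤ 1 / N (dist x y) := one_div_nonneg.mpr (by linarith)
  have hα : α0 ≤ dist x y := (le_of_max_le_right hr).trans hry.le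
  obtain ⟨z, hz, hzy⟩ := exists_mem_closedBall_dist_le_of_interpolating (hr0.trans hry) hε
    (mul_le_of_le_one_add_mul hr0 hε hεδ hδ hyR) hry.le fun lam hlam =>
      (hsag x y hα lam hlam).imp fun _ hz => ⟨hz.2.1, hz.2.2.2⟩
  exact ⟨z, hz, (dist_comm y z).trans_le <| hzy.trans <|
    sub_add_two_mul_le_of_le_one_add_mul hr0 hεδ hδ hry.le hyR⟩

/-- Let `(X, d)` be a metric space and `N : ℝ₊ → ℝ₊` increasing and unbounded. Suppose `X` is
SAG*(N): there is `α₀ > 0` such that for all `x, y` with `d(x,y) = r ≥ α₀` and all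
`λ ∈ [0,1]`, there exists `z` with `(λ − 1/N(r))r ≤ d(x,z) ≤ (λ + 1/N(r))r` and
`(1 − λ − 1/N(r))r ≤ d(z,y) ≤ (1 − λ + 1/N(r))r`. Then for all sufficiently large `r`, the
ball `B(x, (1 + 1/N(r))r)` is contained in the `6r/N(r)`-neighborhood of `B(x, r)`, for every
`x ∈ X`. -/
theorem stmt10 {X : Type*} [MetricSpace X] (N : ℝ → ℝ)
    (hmono : Monotone N) (hpos : ∀ r > (0 : ℝ), 0 < N r)
    (hunb : Tendsto N atTop atTop)
    (α0 : ℝ) (hα0 : 0 < α0)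
    (hsag : ∀ x y : X, α0 ≤ dist x y → ∀ lam ∈ Set.Icc (0 : ℝ) 1,
      ∃ z : X,
        (lam - 1 / N (dist x y)) * dist x y ≤ dist x z ∧
        dist x z ≤ (lam + 1 / N (dist x y)) * dist x y ∧
        (1 - lam - 1 / N (dist x y)) * dist x y ≤ dist z y ∧
        dist z y ≤ (1 - lam + 1 / N (dist x y)) * dist x y) :
    ∃ r0 : ℝ, ∀ r : ℝ, r0 ≤ r → ∀ x : X,
      Metric.closedBall x ((1 + 1 / N r) * r) ⊆
        Metric.cthickening (6 * r / N r) (Metric.closedBall x r) :=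
  stmt10_general N hmono hunb α0 hα0 hsag
end

section
/- Let X = (V,E) be a graph of degree at most q, and let ν be a probability distribution on [0,∞) for i.i.d. edge weights with ν({0}) < 1/q and finite mean. Then there exists a'' > 0 such that the average distance satisfies d̄(x,y) ≥ a''·d(x,y) for all x, y ∈ V. -/
/-!
Let `φ(t) = ∫ e^{-t s} dν(s)`. Along a self-avoiding path with `n ≥ d(x,y)` edges, Chernoff's bound
gives `P(weight ≤ ε d(x,y)) ≤ (e^{tε} φ(t))^n`. Since `φ(t) → ν{0} < 1/q` as `t → ∞` and there are
at most `q^n` paths of length `n`, `t` and `ε` can be chosen with `r = q e^{tε} φ(t) < 1`; summing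
over `n` gives `P(d_ω(x,y) < ε d(x,y)) ≤ r^{d(x,y)} / (1 - r) ≤ 1/2` for `d(x,y)` large, and then
`d̄(x,y) ≥ ε d(x,y) / 2` by Markov's inequality. For the remaining distances, with probability at
least `1 - q ν[0,δ) > 0` every edge at `x` weighs at least `δ`, so `d̄(x,y)` is bounded below by a
positive constant.
-/

open MeasureTheory ProbabilityTheory

/-- The weighted graph distance: the infimum, over all walks `p` from `x` to `y`, of the sum
of the weights of the edges of `p`. -/
noncomputable def wdist {V : Type*} (G : SimpleGraph V) (w : Sym2 V → ℝ) (x y : V) : ℝ :=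
  ⨅ p : G.Walk x y, (p.edges.map w).sum

open Finset Filter Topology Set Real

namespace SimpleGraph

variable {V : Type*} {G : SimpleGraph V}

theorem card_finsetWalkLength_le_pow [DecidableEq V] [G.LocallyFinite] {q : ℕ}
    (hdeg : ∀ v, G.degree v ≤ q) (n : ℕ) (u v : V) : #(G.finsetWalkLength n u v) ≤ q ^ n := by
  induction n generalizing u with
  | zero =>
    rw [finsetWalkLength]
    split_ifs with h
    · subst h; simp
    · simp
  | succ n ih =>
    rw [finsetWalkLength]
    calc _ ≤ ∑ w : G.neighborSet u, q ^ n :=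
          card_biUnion_le.trans <| sum_le_sum fun w _ => (card_map _).trans_le (ih w)
      _ ≤ q ^ (n + 1) := by
          rw [sum_const, card_univ, card_neighborSet_eq_degree, smul_eq_mul, pow_succ']
          exact Nat.mul_le_mul_right _ (hdeg u)

instance Walk.countable [DecidableEq V] [G.LocallyFinite] (u v : V) : Countable (G.Walk u v) :=
  Countable.of_equiv _ (Equiv.sigmaFiberEquiv fun p : G.Walk u v => p.length)

open Classical in
theorem Walk.IsTrail.sum_edges_eq_sum_subtype {u v : V} {p : G.Walk u v}
    (hp : p.IsTrail) (f : Sym2 V → ℝ) :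
    (p.edges.map f).sum = ∑ e ∈ p.edges.toFinset.subtype (· ∈ G.edgeSet), f e := by
  rw [sum_subtype_eq_sum_filter, filter_true_of_mem fun e he =>
    p.edges_subset_edgeSet (List.mem_toFinset.mp he), List.sum_toFinset _ hp.edges_nodup]

open Classical in
theorem Walk.IsTrail.card_subtype_edges {u v : V} {p : G.Walk u v}
    (hp : p.IsTrail) : #(p.edges.toFinset.subtype (· ∈ G.edgeSet)) = p.length := by
  rw [card_subtype, filter_true_of_mem fun e he =>
    p.edges_subset_edgeSet (List.mem_toFinset.mp he), List.toFinset_card_of_nodup hp.edges_nodup,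
    Walk.length_edges]

variable {w : Sym2 V → ℝ} {x y : V}

theorem Walk.sum_edges_nonneg (hw : ∀ e, 0 ≤ w e) (p : G.Walk x y) : 0 ≤ (p.edges.map w).sum :=
  List.sum_nonneg <| by simpa using fun e _ => hw e

theorem wdist_nonneg (hw : ∀ e, 0 ≤ w e) : 0 ≤ wdist G w x y :=
  Real.iInf_nonneg fun p => p.sum_edges_nonneg hw

theorem wdist_le_sum_edges (hw : ∀ e, 0 ≤ w e) (p : G.Walk x y) :
    wdist G w x y ≤ (p.edges.map w).sum :=
  ciInf_le ⟨0, by rintro _ ⟨p, rfl⟩; exact p.sum_edges_nonneg hw⟩ p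

theorem Walk.sum_edges_bypass_le [DecidableEq V] (hw : ∀ e, 0 ≤ w e) (p : G.Walk x y) :
    (p.bypass.edges.map w).sum ≤ (p.edges.map w).sum :=
  (p.edges_bypass_sublist_edges.map w).sum_le_sum <| by simpa using fun e _ => hw e

theorem exists_isPath_sum_edges_lt_of_wdist_lt (hw : ∀ e, 0 ≤ w e) (h : G.Reachable x y) {a : ℝ}
    (ha : wdist G w x y < a) : ∃ p : G.Walk x y, p.IsPath ∧ (p.edges.map w).sum < a := by
  classical
  have : Nonempty (G.Walk x y) := h
  obtain ⟨p, hp⟩ := exists_lt_of_ciInf_lt ha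
  exact ⟨p.bypass, p.bypass_isPath, (p.sum_edges_bypass_le hw).trans_lt hp⟩

theorem le_wdist_of_forall_adj_le (hw : ∀ e, 0 ≤ w e) (h : G.Reachable x y) (hxy : x ≠ y)
    {δ : ℝ} (hδ : ∀ v, G.Adj x v → δ ≤ w s(x, v)) : δ ≤ wdist G w x y := by
  have : Nonempty (G.Walk x y) := h
  refine le_ciInf fun p => ?_
  cases p with
  | nil => exact absurd rfl hxy
  | cons hadj p =>
    rw [Walk.edges_cons, List.map_cons, List.sum_cons]
    linarith [hδ _ hadj, p.sum_edges_nonneg hw]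

end SimpleGraph

section Probability

variable {Ω : Type*} [MeasurableSpace Ω] {μ : Measure Ω}

theorem measurable_list_sum_map {ι : Type*} {f : Ω → ι → ℝ} (hf : ∀ i, Measurable fun ω => f ω i)
    (l : List ι) : Measurable fun ω => (l.map (f ω)).sum := by
  induction l with
  | nil => simp
  | cons i l ih =>
    simp only [List.map_cons, List.sum_cons]
    exact (hf i).add ih

theorem integrable_list_sum_map {ι : Type*} {f : Ω → ι → ℝ} (l : List ι)
    (hf : ∀ i ∈ l, Integrable (fun ω => f ω i) μ) : Integrable (fun ω => (l.map (f ω)).sum) μ := by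
  induction l with
  | nil => simp
  | cons i l ih =>
    simp only [List.map_cons, List.sum_cons]
    exact (hf i (by simp)).add (ih fun j hj => hf j (by simp [hj]))

theorem mul_one_sub_le_integral [IsProbabilityMeasure μ] {f : Ω → ℝ} (hf0 : ∀ ω, 0 ≤ f ω)
    (hf : Integrable f μ) {a p : ℝ} (ha : 0 ≤ a) (hp : μ.real {ω | f ω < a} ≤ p) :
    a * (1 - p) ≤ ∫ ω, f ω ∂μ := by
  have hcover : 1 ≤ μ.real {ω | a ≤ f ω} + μ.real {ω | f ω < a} := by
    have : {ω | a ≤ f ω} ∪ {ω | f ω < a} = univ := by ext ω; simp [le_or_gt]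
    simpa [this] using measureReal_union_le (μ := μ) {ω | a ≤ f ω} {ω | f ω < a}
  calc a * (1 - p) ≤ a * μ.real {ω | a ≤ f ω} := by gcongr; linarith
    _ ≤ ∫ ω, f ω ∂μ := mul_meas_ge_le_integral_of_nonneg (ae_of_all _ hf0) hf a

theorem measureReal_sum_le_le_exp_mul_pow {ι : Type*} {X : ι → Ω → ℝ} (hindep : iIndepFun X μ)
    (hmeas : ∀ i, Measurable (X i)) (hX : ∀ i ω, 0 ≤ X i ω) {t ρ : ℝ} (ht : 0 ≤ t)
    (s : Finset ι) (hρ : ∀ i ∈ s, mgf (X i) μ (-t) = ρ) (a : ℝ) :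
    μ.real {ω | ∑ i ∈ s, X i ω ≤ a} ≤ exp (t * a) * ρ ^ #s := by
  have := hindep.isProbabilityMeasure
  have hint : Integrable (fun ω => exp (-t * ∑ i ∈ s, X i ω)) μ := by
    refine (integrable_const 1).mono' (by fun_prop) (ae_of_all _ fun ω => ?_)
    rw [norm_of_nonneg (exp_pos _).le, exp_le_one_iff]
    exact mul_nonpos_of_nonpos_of_nonneg (neg_nonpos.mpr ht) (sum_nonneg fun i _ => hX i ω)
  have hmgf : mgf (fun ω => ∑ i ∈ s, X i ω) μ (-t) = ρ ^ #s := by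
    rw [← Finset.sum_fn, hindep.mgf_sum hmeas, prod_congr rfl hρ, prod_const]
  simpa [hmgf] using measure_le_le_exp_mul_mgf a (neg_nonpos.mpr ht) hint

theorem tendsto_mgf_neg_atTop {ν : Measure ℝ} [IsFiniteMeasure ν] (hν : ν (Iio 0) = 0) :
    Tendsto (fun t => mgf id ν (-t)) atTop (𝓝 (ν.real {0})) := by
  have hnonneg : ∀ᵐ x ∂ν, 0 ≤ x := ae_iff.mpr (measure_mono_null (fun x hx => not_le.mp hx) hν)
  rw [← integral_indicator_one (measurableSet_singleton 0)]
  simp only [mgf, id]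
  refine tendsto_integral_filter_of_dominated_convergence 1 (.of_forall fun t => by fun_prop) ?_
    (integrable_const 1) ?_
  · filter_upwards [eventually_ge_atTop 0] with t ht
    filter_upwards [hnonneg] with x hx
    simpa [norm_of_nonneg (exp_pos _).le] using mul_nonneg ht hx
  · filter_upwards [hnonneg] with x hx
    rcases hx.eq_or_lt with rfl | hx
    · simp
    · rw [indicator_of_notMem (by simpa using hx.ne')]
      exact tendsto_exp_atBot.comp (tendsto_neg_atTop_atBot.atBot_mul_const hx)

theorem exists_mul_exp_mul_mgf_neg_lt_one {ν : Measure ℝ} [IsFiniteMeasure ν]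
    (hν : ν (Iio 0) = 0) {q : ℝ} (hq : q * ν.real {0} < 1) :
    ∃ t ≥ 0, ∃ ε > 0, q * (exp (t * ε) * mgf id ν (-t)) < 1 := by
  obtain ⟨t, ht, ht0⟩ := ((((tendsto_mgf_neg_atTop hν).const_mul q).eventually_lt_const hq).and
    (eventually_ge_atTop 0)).exists
  have hcont : Tendsto (fun ε => q * (exp (t * ε) * mgf id ν (-t))) (𝓝[>] 0)
      (𝓝 (q * mgf id ν (-t))) := by
    have hc : Continuous fun ε => q * (exp (t * ε) * mgf id ν (-t)) := by fun_prop
    simpa using (hc.tendsto 0).mono_left nhdsWithin_le_nhds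
  obtain ⟨ε, hε, hε0⟩ := ((hcont.eventually_lt_const ht).and self_mem_nhdsWithin).exists
  exact ⟨t, ht0, ε, hε0, hε⟩

theorem exists_pos_mul_measureReal_Iio_lt_one {ν : Measure ℝ} [IsProbabilityMeasure ν]
    (hν : ν (Iio 0) = 0) {q : ℝ} (hq0 : 0 ≤ q) (hq : q * ν.real {0} < 1) :
    ∃ δ > 0, q * ν.real (Iio δ) < 1 := by
  have hcdf : q * cdf ν 0 < 1 := by
    refine lt_of_le_of_lt ?_ hq
    rw [cdf_eq_real, ← Iio_union_right]
    refine mul_le_mul_of_nonneg_left ((measureReal_union_le _ _).trans_eq ?_) hq0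
    simp [measureReal_def, hν]
  have hcont : Tendsto (fun δ => q * cdf ν δ) (𝓝[>] 0) (𝓝 (q * cdf ν 0)) :=
    (((cdf ν).right_continuous 0).mono Ioi_subset_Ici_self).const_mul q
  obtain ⟨δ, hδ, hδ0⟩ := ((hcont.eventually_lt_const hcdf).and self_mem_nhdsWithin).exists
  refine ⟨δ, hδ0, lt_of_le_of_lt ?_ hδ⟩
  rw [cdf_eq_real]
  exact mul_le_mul_of_nonneg_left (measureReal_mono Set.Iio_subset_Iic_self) hq0

end Probability

theorem exists_pos_mul_le_of_far_of_near {α : Type*} {d : α → ℕ} {f : α → ℝ} (hf : ∀ a, 0 ≤ f a)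
    {ε c : ℝ} (hε : 0 < ε) (hc : 0 < c) {D : ℕ} (hfar : ∀ a, D ≤ d a → ε * d a ≤ f a)
    (hnear : ∀ a, d a ≠ 0 → c ≤ f a) : ∃ k > 0, ∀ a, k * d a ≤ f a := by
  refine ⟨min ε (c / (D + 1)), lt_min hε (by positivity), fun a => ?_⟩
  rcases le_or_gt D (d a) with hD | hD
  · exact (mul_le_mul_of_nonneg_right (min_le_left _ _) (Nat.cast_nonneg _)).trans (hfar a hD)
  rcases eq_or_ne (d a) 0 with h0 | h0
  · simp [h0, hf a]
  calc min ε (c / (D + 1)) * d a ≤ c / (D + 1) * (D + 1) := by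
        gcongr
        · exact min_le_right _ _
        · exact_mod_cast hD.le.trans (Nat.le_succ D)
    _ = c := by field_simp
    _ ≤ f a := hnear a h0

namespace SimpleGraph

variable {V : Type*} {G : SimpleGraph V} {Ω : Type*} [MeasurableSpace Ω] {μ : Measure Ω}
  {W : Ω → Sym2 V → ℝ} {ν : Measure ℝ} {x y : V}

theorem measurable_wdist [Countable (G.Walk x y)] (hmeas : ∀ e, Measurable fun ω => W ω e) :
    Measurable fun ω => wdist G (W ω) x y :=
  Measurable.iInf fun p => measurable_list_sum_map hmeas p.edges

theorem integrable_wdist [Countable (G.Walk x y)] (h : G.Reachable x y)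
    (hpos : ∀ ω e, 0 ≤ W ω e) (hmeas : ∀ e, Measurable fun ω => W ω e)
    (hint : ∀ e ∈ G.edgeSet, Integrable (fun ω => W ω e) μ) :
    Integrable (fun ω => wdist G (W ω) x y) μ := by
  obtain ⟨p⟩ := h
  refine (integrable_list_sum_map p.edges fun e he => hint e (p.edges_subset_edgeSet he)).mono'
    (measurable_wdist hmeas).aestronglyMeasurable (ae_of_all _ fun ω => ?_)
  rw [norm_of_nonneg (wdist_nonneg (hpos ω))]
  exact wdist_le_sum_edges (hpos ω) p

theorem Walk.IsTrail.measureReal_sum_edges_le_le_exp_mul_pow (hpos : ∀ ω e, 0 ≤ W ω e)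
    (hmeas : ∀ e, Measurable fun ω => W ω e)
    (hindep : iIndepFun (fun (e : G.edgeSet) ω => W ω (e : Sym2 V)) μ)
    (hlaw : ∀ e : G.edgeSet, μ.map (fun ω => W ω (e : Sym2 V)) = ν)
    {p : G.Walk x y} (hp : p.IsTrail) {t : ℝ} (ht : 0 ≤ t) (a : ℝ) :
    μ.real {ω | (p.edges.map (W ω)).sum ≤ a} ≤ exp (t * a) * mgf id ν (-t) ^ p.length := by
  classical
  simp_rw [hp.sum_edges_eq_sum_subtype, ← hp.card_subtype_edges]
  refine measureReal_sum_le_le_exp_mul_pow hindep (fun e => hmeas e) (fun e ω => hpos ω e) ht _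
    (fun e _ => ?_) a
  rw [← hlaw e, mgf_id_map (hmeas e).aemeasurable]

theorem measure_wdist_lt_le_tsum [DecidableEq V] [G.LocallyFinite] (hpos : ∀ ω e, 0 ≤ W ω e)
    (h : G.Reachable x y) (a : ℝ) :
    μ {ω | wdist G (W ω) x y < a} ≤ ∑' m, ∑ p ∈ {p ∈ G.finsetWalkLength (m + G.dist x y) x y |
      p.IsPath}, μ {ω | (p.edges.map (W ω)).sum ≤ a} := by
  calc μ {ω | wdist G (W ω) x y < a}
      ≤ μ (⋃ m, ⋃ p ∈ {p ∈ G.finsetWalkLength (m + G.dist x y) x y | p.IsPath},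
          {ω | (p.edges.map (W ω)).sum ≤ a}) := by
        refine measure_mono fun ω hω => ?_
        obtain ⟨p, hp, hpa⟩ := exists_isPath_sum_edges_lt_of_wdist_lt (hpos ω) h hω
        have hlen : p.length = p.length - G.dist x y + G.dist x y :=
          (Nat.sub_add_cancel (dist_le p)).symm
        simp only [mem_iUnion, mem_filter, mem_finsetWalkLength_iff]
        exact ⟨_, p, ⟨hlen, hp⟩, hpa.le⟩
    _ ≤ _ := (measure_iUnion_le _).trans (ENNReal.tsum_le_tsum fun m =>
        measure_biUnion_finset_le _ _)

theorem measureReal_wdist_lt_mul_dist_le [DecidableEq V] [G.LocallyFinite] {q : ℕ}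
    (hdeg : ∀ v, G.degree v ≤ q) (hpos : ∀ ω e, 0 ≤ W ω e)
    (hmeas : ∀ e, Measurable fun ω => W ω e)
    (hindep : iIndepFun (fun (e : G.edgeSet) ω => W ω (e : Sym2 V)) μ)
    (hlaw : ∀ e : G.edgeSet, μ.map (fun ω => W ω (e : Sym2 V)) = ν) (h : G.Reachable x y)
    {t ε : ℝ} (ht : 0 ≤ t) (hε : 0 ≤ ε) (hr : q * (exp (t * ε) * mgf id ν (-t)) < 1) :
    μ.real {ω | wdist G (W ω) x y < ε * G.dist x y} ≤
      (q * (exp (t * ε) * mgf id ν (-t))) ^ G.dist x y /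
        (1 - q * (exp (t * ε) * mgf id ν (-t))) := by
  have := hindep.isProbabilityMeasure
  set s := exp (t * ε) * mgf id ν (-t)
  set d := G.dist x y
  have hs : 0 ≤ s := mul_nonneg (exp_pos _).le mgf_nonneg
  have hqs : 0 ≤ q * s := by positivity
  have hpath : ∀ n, ∀ p ∈ {p ∈ G.finsetWalkLength (n + d) x y | p.IsPath},
      μ {ω | (p.edges.map (W ω)).sum ≤ ε * d} ≤ ENNReal.ofReal (s ^ (n + d)) := by
    intro n p hp
    rw [mem_filter, mem_finsetWalkLength_iff] at hp
    rw [← ofReal_measureReal]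
    refine ENNReal.ofReal_le_ofReal <|
      (hp.2.isTrail.measureReal_sum_edges_le_le_exp_mul_pow hpos hmeas hindep hlaw ht _).trans ?_
    rw [hp.1, mul_pow, ← exp_nat_mul]
    refine mul_le_mul_of_nonneg_right (exp_le_exp.mpr ?_) (pow_nonneg mgf_nonneg _)
    push_cast
    nlinarith [mul_nonneg ht hε, (Nat.cast_nonneg n : (0 : ℝ) ≤ n)]
  have hlength : ∀ n, ∑ p ∈ {p ∈ G.finsetWalkLength (n + d) x y | p.IsPath},
      μ {ω | (p.edges.map (W ω)).sum ≤ ε * d} ≤ ENNReal.ofReal ((q * s) ^ (n + d)) := by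
    intro n
    calc _ ≤ #{p ∈ G.finsetWalkLength (n + d) x y | p.IsPath} • ENNReal.ofReal (s ^ (n + d)) :=
          sum_le_card_nsmul _ _ _ (hpath n)
      _ ≤ q ^ (n + d) • ENNReal.ofReal (s ^ (n + d)) := by
          gcongr
          exact (card_filter_le _ _).trans (card_finsetWalkLength_le_pow hdeg _ _ _)
      _ = ENNReal.ofReal ((q * s) ^ (n + d)) := by
          rw [nsmul_eq_mul, mul_pow (q : ℝ) s, ENNReal.ofReal_mul (by positivity), ← Nat.cast_pow,
            ENNReal.ofReal_natCast]
  have hgeom : HasSum (fun n => (q * s) ^ (n + d)) ((q * s) ^ d / (1 - q * s)) := by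
    simp_rw [pow_add, div_eq_inv_mul]
    exact (hasSum_geometric_of_lt_one hqs hr).mul_right _
  refine ENNReal.toReal_le_of_le_ofReal (hgeom.nonneg fun n => by positivity) ?_
  calc μ _ ≤ _ := measure_wdist_lt_le_tsum hpos h _
    _ ≤ ∑' n, ENNReal.ofReal ((q * s) ^ (n + d)) := ENNReal.tsum_le_tsum hlength
    _ = _ := by
      rw [← ENNReal.ofReal_tsum_of_nonneg (fun n => by positivity) hgeom.summable, hgeom.tsum_eq]

theorem measureReal_wdist_lt_le_mul [G.LocallyFinite] [IsFiniteMeasure μ] {q : ℕ}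
    (hdeg : ∀ v, G.degree v ≤ q) (hpos : ∀ ω e, 0 ≤ W ω e)
    (hmeas : ∀ e, Measurable fun ω => W ω e)
    (hlaw : ∀ e : G.edgeSet, μ.map (fun ω => W ω (e : Sym2 V)) = ν) (h : G.Reachable x y)
    (hxy : x ≠ y) (δ : ℝ) :
    μ.real {ω | wdist G (W ω) x y < δ} ≤ q * ν.real (Iio δ) := by
  calc μ.real {ω | wdist G (W ω) x y < δ}
      ≤ μ.real (⋃ v ∈ G.neighborFinset x, {ω | W ω s(x, v) < δ}) := by
        refine measureReal_mono (fun ω hω => ?_) (measure_ne_top μ _)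
        by_contra hnot
        simp only [mem_iUnion, mem_ofPred_eq, mem_neighborFinset, not_exists, not_lt] at hnot
        exact (not_le.mpr hω) (le_wdist_of_forall_adj_le (hpos ω) h hxy hnot)
    _ ≤ ∑ v ∈ G.neighborFinset x, μ.real {ω | W ω s(x, v) < δ} :=
        measureReal_biUnion_finset_le _ _
    _ = G.degree x * ν.real (Iio δ) := by
        rw [← card_neighborFinset_eq_degree, ← nsmul_eq_mul, ← sum_const]
        refine sum_congr rfl fun v hv => ?_
        rw [← hlaw ⟨s(x, v), (mem_neighborFinset _ _ _).mp hv⟩,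
          map_measureReal_apply (hmeas _) measurableSet_Iio]
        rfl
    _ ≤ q * ν.real (Iio δ) := by gcongr; exact_mod_cast hdeg x

theorem exists_pos_mul_dist_le_integral_wdist [DecidableEq V] [G.LocallyFinite]
    [IsFiniteMeasure ν] {q : ℕ} (hconn : G.Connected) (hdeg : ∀ v, G.degree v ≤ q)
    (hpos : ∀ ω e, 0 ≤ W ω e) (hmeas : ∀ e, Measurable fun ω => W ω e)
    (hindep : iIndepFun (fun (e : G.edgeSet) ω => W ω (e : Sym2 V)) μ)
    (hlaw : ∀ e : G.edgeSet, μ.map (fun ω => W ω (e : Sym2 V)) = ν) (hsupp : ν (Iio 0) = 0)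
    (hν0 : q * ν.real {0} < 1) (hint : ∀ x y, Integrable (fun ω => wdist G (W ω) x y) μ) :
    ∃ ε > 0, ∃ D : ℕ, ∀ x y, D ≤ G.dist x y → ε * G.dist x y ≤ ∫ ω, wdist G (W ω) x y ∂μ := by
  have := hindep.isProbabilityMeasure
  obtain ⟨t, ht, ε, hε, hr⟩ := exists_mul_exp_mul_mgf_neg_lt_one hsupp hν0
  set r := (q : ℝ) * (exp (t * ε) * mgf id ν (-t))
  have hr0 : 0 ≤ r := mul_nonneg q.cast_nonneg (mul_nonneg (exp_pos _).le mgf_nonneg)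
  obtain ⟨D, hD⟩ := exists_pow_lt_of_lt_one (by linarith : 0 < (1 - r) / 2) hr
  refine ⟨ε / 2, by positivity, D, fun x y hd => ?_⟩
  have hsmall : r ^ G.dist x y / (1 - r) ≤ 1 / 2 := by
    rw [div_le_iff₀ (by linarith)]
    linarith [pow_le_pow_of_le_one hr0 hr.le hd]
  have := mul_one_sub_le_integral (fun ω => wdist_nonneg (hpos ω)) (hint x y) (by positivity)
    ((measureReal_wdist_lt_mul_dist_le hdeg hpos hmeas hindep hlaw (hconn.preconnected x y) ht
      hε.le hr).trans hsmall)
  linarith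

theorem exists_pos_le_integral_wdist_of_ne [G.LocallyFinite] [IsProbabilityMeasure μ]
    [IsProbabilityMeasure ν] {q : ℕ} (hconn : G.Connected) (hdeg : ∀ v, G.degree v ≤ q)
    (hpos : ∀ ω e, 0 ≤ W ω e) (hmeas : ∀ e, Measurable fun ω => W ω e)
    (hlaw : ∀ e : G.edgeSet, μ.map (fun ω => W ω (e : Sym2 V)) = ν) (hsupp : ν (Iio 0) = 0)
    (hν0 : q * ν.real {0} < 1) (hint : ∀ x y, Integrable (fun ω => wdist G (W ω) x y) μ) :
    ∃ c > 0, ∀ x y, x ≠ y → c ≤ ∫ ω, wdist G (W ω) x y ∂μ := by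
  obtain ⟨δ, hδ, hνδ⟩ := exists_pos_mul_measureReal_Iio_lt_one hsupp q.cast_nonneg hν0
  refine ⟨δ * (1 - q * ν.real (Iio δ)), mul_pos hδ (by linarith), fun x y hxy => ?_⟩
  exact mul_one_sub_le_integral (fun ω => wdist_nonneg (hpos ω)) (hint x y) hδ.le
    (measureReal_wdist_lt_le_mul hdeg hpos hmeas hlaw (hconn.preconnected x y) hxy δ)

end SimpleGraph

open SimpleGraph

theorem stmt11_general {V : Type*} (G : SimpleGraph V) (hconn : G.Connected) (q : ℕ)
    (hfin : ∀ v, (G.neighborSet v).Finite)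
    (hdeg : ∀ v, (G.neighborSet v).ncard ≤ q)
    {Ω : Type*} [MeasurableSpace Ω] (μ : Measure Ω) [IsProbabilityMeasure μ]
    (W : Ω → Sym2 V → ℝ) (ν : Measure ℝ) [IsProbabilityMeasure ν]
    (hpos : ∀ ω e, 0 ≤ W ω e)
    (hmeas : ∀ e : Sym2 V, Measurable fun ω => W ω e)
    (hindep : iIndepFun
      (fun (e : G.edgeSet) ω => W ω (e : Sym2 V)) μ)
    (hlaw : ∀ e : G.edgeSet, Measure.map (fun ω => W ω (e : Sym2 V)) μ = ν)
    (hsupp : ν (Set.Iio 0) = 0)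
    (hν0 : ν {0} < 1 / (q : ENNReal))
    (hmean : Integrable id ν) :
    ∃ a'' > (0 : ℝ), ∀ x y : V,
      a'' * (G.dist x y : ℝ) ≤ ∫ ω, wdist G (W ω) x y ∂μ := by
  classical
  let : G.LocallyFinite := fun v => (hfin v).fintype
  have hdeg' (v : V) : G.degree v ≤ q := by
    rw [← card_neighborSet_eq_degree, ← Nat.card_eq_fintype_card, Nat.card_coe_set_eq]
    exact hdeg v
  have hν0' : q * ν.real {0} < 1 := by
    have := ENNReal.toReal_lt_of_lt_ofReal <|
      (ENNReal.mul_lt_of_lt_div' hν0).trans_eq ENNReal.ofReal_one.symm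
    simpa [measureReal_def] using this
  have hint (x y : V) : Integrable (fun ω => wdist G (W ω) x y) μ :=
    integrable_wdist (hconn.preconnected x y) hpos hmeas fun e he =>
      ((hlaw ⟨e, he⟩).symm ▸ hmean).comp_aemeasurable (hmeas e).aemeasurable
  obtain ⟨ε, hε, D, hfar⟩ := exists_pos_mul_dist_le_integral_wdist hconn hdeg' hpos hmeas hindep
    hlaw hsupp hν0' hint
  obtain ⟨c, hc, hnear⟩ := exists_pos_le_integral_wdist_of_ne hconn hdeg' hpos hmeas hlaw hsupp
    hν0' hint
  obtain ⟨k, hk, hle⟩ := exists_pos_mul_le_of_far_of_near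
    (d := fun z : V × V => G.dist z.1 z.2) (f := fun z => ∫ ω, wdist G (W ω) z.1 z.2 ∂μ)
    (fun z => integral_nonneg fun ω => wdist_nonneg (hpos ω)) hε hc (fun z => hfar z.1 z.2)
    (fun z hz => hnear z.1 z.2 fun h => hz (h ▸ dist_self))
  exact ⟨k, hk, fun x y => hle (x, y)⟩

/-- Let `X = (V,E)` be a (connected) graph of degree at most `q`, and let `ν` be a
probability distribution on `[0,∞)` for i.i.d. edge weights with `ν({0}) < 1/q` and finite
mean. Then there exists `a'' > 0` such that the average distance satisfies
`d̄(x,y) ≥ a''·d(x,y)` for all `x, y ∈ V`. -/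
theorem stmt11 {V : Type*} (G : SimpleGraph V) (hconn : G.Connected) (q : ℕ) (hq : 1 ≤ q)
    (hfin : ∀ v, (G.neighborSet v).Finite)
    (hdeg : ∀ v, (G.neighborSet v).ncard ≤ q)
    {Ω : Type*} [MeasurableSpace Ω] (μ : Measure Ω) [IsProbabilityMeasure μ]
    (W : Ω → Sym2 V → ℝ) (ν : Measure ℝ) [IsProbabilityMeasure ν]
    (hpos : ∀ ω e, 0 ≤ W ω e)
    (hmeas : ∀ e : Sym2 V, Measurable fun ω => W ω e)
    (hindep : iIndepFun
      (fun (e : G.edgeSet) ω => W ω (e : Sym2 V)) μ)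
    (hlaw : ∀ e : G.edgeSet, Measure.map (fun ω => W ω (e : Sym2 V)) μ = ν)
    (hsupp : ν (Set.Iio 0) = 0)
    (hν0 : ν {0} < 1 / (q : ENNReal))
    (hmean : Integrable id ν) :
    ∃ a'' > (0 : ℝ), ∀ x y : V,
      a'' * (G.dist x y : ℝ) ≤ ∫ ω, wdist G (W ω) x y ∂μ :=
  stmt11_general G hconn q hfin hdeg μ W ν hpos hmeas hindep hlaw hsupp hν0 hmean
end

section
/- Let (r_k') be a sequence of reals with r_k' ≥ 1 satisfying r_k' ≥ (1/2)(r_{k-1}' − C·(r_{k-1}'·log r_{k-1}')^{1/2}) for all k ≥ 1, where r_0' = r_0 ≥ 2, and suppose 2^{-k}·r_0 ≥ α_0 for a sufficiently large constant α_0 depending on C. Then there is a constant C'' > 0 depending only on C such that r_k' ≥ α·(1 − C''·(log α / α)^{1/2}) where α = r_0/2^k. -/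
/-!
Write `α_k = r₀ / 2^k`. The bound `r'_k ≥ α_k - 20 C √(α_k log α_k)` propagates by induction on `k`:
the recursion halves `r'_{k-1}` and subtracts `C √(r'_{k-1} log r'_{k-1})`, while the admissible
error `√(α log α)` only shrinks by a factor `√2 (1 + o(1))` when `α_{k-1} = 2 α_k` is halved. If
`r'_{k-1} ≤ 4 α_k`, the new error is `O(√(α_k log α_k))` and is absorbed; if `r'_{k-1} > 4 α_k`, the
subtracted term is at most `r'_{k-1} / 2` once `α_k ≳ C⁴`, leaving `r'_k ≥ α_k`.
-/

open Real

namespace Real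

lemma mul_sqrt_log_div_self {a : ℝ} (ha : 0 ≤ a) : a * √(log a / a) = √(a * log a) := by
  rcases ha.eq_or_lt with rfl | ha
  · simp
  rw [show a * log a = a ^ 2 * (log a / a) by field_simp, sqrt_mul (by positivity),
    sqrt_sq ha.le]

lemma log_le_two_mul_sqrt {x : ℝ} (hx : 0 ≤ x) : log x ≤ 2 * √x := by
  have := log_le_rpow_div hx one_half_pos
  rw [sqrt_eq_rpow]
  linarith

lemma log_mul_le_three_halves_mul_log {c a : ℝ} (hc : 0 < c) (h : c ^ 2 ≤ a) :
    log (c * a) ≤ 3 / 2 * log a := by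
  have hc₂ : 0 < c ^ 2 := pow_pos hc 2
  have hlog_sq : 2 * log c ≤ log a := by
    have := log_le_log hc₂ h
    rwa [log_pow, Nat.cast_ofNat] at this
  rw [log_mul hc.ne' (hc₂.trans_le h).ne']
  linarith

lemma sqrt_mul_log_two_mul_le {α : ℝ} (hα : 4 ≤ α) :
    √(2 * α * log (2 * α)) ≤ 7 / 4 * √(α * log α) := by
  have hlog : log (2 * α) ≤ 3 / 2 * log α :=
    log_mul_le_three_halves_mul_log two_pos (by linarith)
  have hlogα : 0 ≤ log α := log_nonneg (by linarith)
  rw [sqrt_le_iff, mul_pow, sq_sqrt (by positivity)]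
  constructor
  · positivity
  · nlinarith

lemma sqrt_mul_log_le_of_le_four_mul {α x : ℝ} (hα : 16 ≤ α) (hx₁ : 1 ≤ x) (hx : x ≤ 4 * α) :
    √(x * log x) ≤ 5 / 2 * √(α * log α) := by
  have hlog : log (4 * α) ≤ 3 / 2 * log α :=
    log_mul_le_three_halves_mul_log four_pos (by linarith)
  have hlogx : log x ≤ log (4 * α) := log_le_log (by linarith) hx
  have hlogx₀ : 0 ≤ log x := log_nonneg hx₁
  have hlogα : 0 ≤ log α := log_nonneg (by linarith)
  rw [sqrt_le_iff, mul_pow, sq_sqrt (by positivity)]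
  constructor
  · positivity
  · nlinarith

lemma mul_sqrt_mul_log_le_half {C x : ℝ} (hC : 0 ≤ C) (hx : 64 * C ^ 4 ≤ x) :
    C * √(x * log x) ≤ x / 2 := by
  have hx₀ : 0 ≤ x := le_trans (by positivity) hx
  have hCsqrt : 8 * C ^ 2 ≤ √x := by
    rw [le_sqrt (by positivity) hx₀]
    linarith
  have hlog : 4 * C ^ 2 * log x ≤ x := by
    have := log_le_two_mul_sqrt hx₀
    nlinarith [mul_self_sqrt hx₀, sqrt_nonneg x]
  rw [show C * √(x * log x) = √(C ^ 2 * (x * log x)) by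
    rw [sqrt_mul (sq_nonneg C) (x * log x), sqrt_sq hC], sqrt_le_left (by positivity)]
  nlinarith

end Real

theorem halving_step_lower_bound {C α x : ℝ} (hC : 0 ≤ C) (hα : 16 ≤ α) (hαC : 16 * C ^ 4 ≤ α)
    (hx₁ : 1 ≤ x) (hx : 2 * α - 20 * C * √(2 * α * log (2 * α)) ≤ x) :
    2 * α - 40 * C * √(α * log α) ≤ x - C * √(x * log x) := by
  have hw : 0 ≤ C * √(α * log α) := by positivity
  have hprev : C * √(2 * α * log (2 * α)) ≤ C * (7 / 4 * √(α * log α)) := by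
    gcongr
    exact sqrt_mul_log_two_mul_le (by linarith)
  rcases le_or_gt x (4 * α) with hx_le | hx_gt
  · have hstep : C * √(x * log x) ≤ C * (5 / 2 * √(α * log α)) := by
      gcongr
      exact sqrt_mul_log_le_of_le_four_mul hα hx₁ hx_le
    -- `20 · 7/4 + 5/2 ≤ 40` is what makes the constant `20` self-reproducing.
    linarith
  · have hhalf := mul_sqrt_mul_log_le_half (x := x) hC (by linarith)
    linarith

theorem sub_mul_sqrt_mul_log_le_of_halving {C : ℝ} {r : ℕ → ℝ} (hC : 0 ≤ C)
    (hr₁ : ∀ k, 1 ≤ r k) (hrec : ∀ k, (r k - C * √(r k * log (r k))) / 2 ≤ r (k + 1))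
    (k : ℕ) (hk : 16 + 16 * C ^ 4 ≤ r 0 / 2 ^ k) :
    r 0 / 2 ^ k - 20 * C * √(r 0 / 2 ^ k * log (r 0 / 2 ^ k)) ≤ r k := by
  induction k with
  | zero =>
    have herr : 0 ≤ C * √(r 0 * log (r 0)) := by positivity
    simp only [pow_zero, div_one]
    linarith
  | succ k ih =>
    set α := r 0 / 2 ^ (k + 1)
    have hdouble : r 0 / 2 ^ k = 2 * α := by
      simp only [α, pow_succ]
      field_simp
    have hC4 : 0 ≤ 16 * C ^ 4 := by positivity
    rw [hdouble] at ih
    have hstep :=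
      halving_step_lower_bound hC (by linarith) (by linarith) (hr₁ k) (ih (by linarith))
    linarith [hrec k]

/-- Let `(r'_k)` be a sequence of reals with `r'_k ≥ 1` satisfying
`r'_k ≥ (1/2)(r'_{k-1} − C√(r'_{k-1} log r'_{k-1}))` for all `k ≥ 1`, with `r'_0 = r₀ ≥ 2`.
Then there are constants `C'' > 0` and `α₀` depending only on `C` such that whenever
`2^{-k} r₀ ≥ α₀`, one has `r'_k ≥ α (1 − C''√(log α / α))` where `α = r₀/2^k`. -/
theorem stmt16 (C : ℝ) (hC : 0 < C) :
    ∃ C'' > (0 : ℝ), ∃ α0 : ℝ, ∀ (r' : ℕ → ℝ) (r0 : ℝ), 2 ≤ r0 → r' 0 = r0 →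
      (∀ k, 1 ≤ r' k) →
      (∀ k : ℕ, 1 ≤ k →
        (1 / 2) * (r' (k - 1) - C * Real.sqrt (r' (k - 1) * Real.log (r' (k - 1)))) ≤ r' k) →
      ∀ k : ℕ, α0 ≤ r0 / 2 ^ k →
        (r0 / 2 ^ k) * (1 - C'' * Real.sqrt (Real.log (r0 / 2 ^ k) / (r0 / 2 ^ k))) ≤
          r' k := by
  refine ⟨20 * C, by positivity, 16 + 16 * C ^ 4, ?_⟩
  rintro r' r0 - rfl hr₁ hrec k hk
  have hα : 0 ≤ r' 0 / 2 ^ k := le_trans (by positivity) hk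
  calc _ = r' 0 / 2 ^ k - 20 * C * √(r' 0 / 2 ^ k * log (r' 0 / 2 ^ k)) := by
        rw [← mul_sqrt_log_div_self hα]
        ring
    _ ≤ r' k := sub_mul_sqrt_mul_log_le_of_halving hC.le hr₁
        (fun k ↦ by simpa [div_eq_inv_mul] using hrec (k + 1) (by omega)) k hk
end
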